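/- arXiv:1804.04396 — 2 statements merged into one kernel-verified Lean document; each statement's English description precedes it below -/
import Mathlib

section
/- There exist a constant c > 0 and p_d > p_c such that for every p ∈ (p_c, p_d), every θ > 1 satisfying K(θ) = 1/f_p'(q_p), and every n ≥ 1, one has θ^{−n(p−p_c)^{−1/2}} ≤ e^{−c n}. -/
open Filter Set Topology MeasureTheory
open scoped Topology

/-- The probability generating function `f(s) = ∑ₖ aₖ sᵏ` of a distribution `a` on ℕ. -/
noncomputable def pgf (a : ℕ → ℝ) (s : ℝ) : ℝ := ∑' n, a n * s ^ n

/-- The generating function `f_p(s) = f(ps + 1 - p)` of the binomially `p`-thinned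
(percolated) offspring distribution. -/
noncomputable def pgfp (a : ℕ → ℝ) (p s : ℝ) : ℝ := pgf a (p * s + 1 - p)

lemma aux_nn (n : ℕ) : (0:ℝ) ≤ (n:ℝ) * ((n:ℝ) - 1) := by
  rcases Nat.eq_zero_or_pos n with h | h
  · simp [h]
  · have : (1:ℝ) ≤ (n:ℝ) := by exact_mod_cast h
    nlinarith

lemma aux_monoA (d : ℝ) (hd : 0 ≤ d) (hd1 : d ≤ 1) (n : ℕ) :
    2*(1-d)^n ≤ 2 - 2*(n:ℝ)*d + (n:ℝ)*((n:ℝ)-1)*d^2 := by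
  induction n with
  | zero => simp
  | succ m ih =>
    have h1 : (0:ℝ) ≤ 1 - d := by linarith
    have h3 : (1-d) * (2*(1-d)^m) ≤ (1-d) * (2 - 2*(m:ℝ)*d + (m:ℝ)*((m:ℝ)-1)*d^2) :=
      mul_le_mul_of_nonneg_left ih h1
    have h4 : (0:ℝ) ≤ (m:ℝ)*((m:ℝ)-1) := aux_nn m
    have h5 : (0:ℝ) ≤ (m:ℝ)*((m:ℝ)-1)*d^3 := by positivity
    have h2 : 2*(1-d)^(m+1) = (1-d) * (2*(1-d)^m) := by ring
    push_cast
    nlinarith [h3, h5, h2]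

lemma aux_monoB (x d : ℝ) (hx : 0 ≤ x) (hd : 0 ≤ d) (n : ℕ) :
    2*x^n + 2*(n:ℝ)*x^(n-1)*d + (n:ℝ)*((n:ℝ)-1)*x^(n-2)*d^2 ≤ 2*(x+d)^n := by
  match n with
  | 0 => simp
  | 1 => simp; ring_nf; nlinarith
  | (m+2) =>
    induction m with
    | zero => push_cast; ring_nf; nlinarith
    | succ k ih =>
      have hkey : 2*x^(k+2) + 2*((k:ℝ)+2)*x^(k+1)*d + ((k:ℝ)+2)*((k:ℝ)+1)*x^k*d^2
          ≤ 2*(x+d)^(k+2) := by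
        have := ih
        simp only [Nat.add_sub_cancel] at this ⊢
        push_cast at this
        convert this using 2 <;> push_cast <;> ring_nf
      have hstep : 2*x^(k+3) + 2*((k:ℝ)+3)*x^(k+2)*d + ((k:ℝ)+3)*((k:ℝ)+2)*x^(k+1)*d^2
          ≤ (x+d) * (2*x^(k+2) + 2*((k:ℝ)+2)*x^(k+1)*d + ((k:ℝ)+2)*((k:ℝ)+1)*x^k*d^2) := by
        have e : (x+d) * (2*x^(k+2) + 2*((k:ℝ)+2)*x^(k+1)*d + ((k:ℝ)+2)*((k:ℝ)+1)*x^k*d^2)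
            - (2*x^(k+3) + 2*((k:ℝ)+3)*x^(k+2)*d + ((k:ℝ)+3)*((k:ℝ)+2)*x^(k+1)*d^2)
            = ((k:ℝ)+2)*((k:ℝ)+1)*x^k*d^3 := by ring
        have hpos : (0:ℝ) ≤ ((k:ℝ)+2)*((k:ℝ)+1)*x^k*d^3 := by positivity
        linarith [e, hpos]
      have hmul : (x+d) * (2*x^(k+2) + 2*((k:ℝ)+2)*x^(k+1)*d + ((k:ℝ)+2)*((k:ℝ)+1)*x^k*d^2)
          ≤ (x+d) * (2*(x+d)^(k+2)) := mul_le_mul_of_nonneg_left hkey (by linarith)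
      have : 2*x^(k+3) + 2*((k:ℝ)+3)*x^(k+2)*d + ((k:ℝ)+3)*((k:ℝ)+2)*x^(k+1)*d^2
          ≤ 2*(x+d)^(k+3) := by
        calc _ ≤ _ := hstep
        _ ≤ (x+d) * (2*(x+d)^(k+2)) := hmul
        _ = 2*(x+d)^(k+3) := by ring
      simp only [Nat.add_sub_cancel] at this ⊢
      push_cast
      convert this using 2 <;> push_cast <;> ring_nf

lemma aux_exp_quad (u : ℝ) : Real.exp u ≤ 1 + u + u^2 * Real.exp |u| := by
  rcases le_or_gt 0 u with hu | hu
  · rw [abs_of_nonneg hu]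
    have h0 : 1 - u ≤ Real.exp (-u) := by linarith [Real.add_one_le_exp (-u)]
    have h : Real.exp u - 1 ≤ u * Real.exp u := by
      have := mul_le_mul_of_nonneg_left h0 (Real.exp_pos u).le
      rw [← Real.exp_add] at this
      simp at this
      nlinarith
    nlinarith [mul_le_mul_of_nonneg_left h hu]
  · rw [abs_of_neg hu]
    have hv : 0 < -u := by linarith
    have h1 : 1 + (-u) ≤ Real.exp (-u) := by linarith [Real.add_one_le_exp (-u)]
    have h2 : Real.exp u * Real.exp (-u) = 1 := by rw [← Real.exp_add]; simp
    have h3 : Real.exp u ≤ 1 + u + u^2 := by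
      nlinarith [Real.exp_pos u, Real.exp_pos (-u)]
    have h4 : 1 ≤ Real.exp (-u) := by linarith
    nlinarith [sq_nonneg u]

set_option maxHeartbeats 1000000 in
lemma deriv_le (a : ℕ → ℝ) (m₁ m₂ pc : ℝ) (q : ℝ → ℝ)
    (ha0 : ∀ k, 0 ≤ a k) (ha1 : HasSum a 1)
    (hm1 : HasSum (fun k : ℕ => (k : ℝ) * a k) m₁) (h1m : 1 < m₁)
    (hm2 : HasSum (fun k : ℕ => (k : ℝ) * ((k : ℝ) - 1) * a k) m₂)
    (hpc : pc = 1 / m₁)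
    (hq : ∀ p ∈ Set.Ioc pc 1, q p ∈ Set.Ico (0 : ℝ) 1 ∧ pgfp a p (q p) = q p) :
    ∃ A > (0:ℝ), ∀ p ∈ Set.Ioo pc ((1+pc)/2),
      deriv (pgfp a p) (q p) ≤ 1 - A*(p-pc) := by
  have hm1pos : (0:ℝ) < m₁ := by linarith
  have hpc0 : 0 < pc := by rw [hpc]; exact one_div_pos.mpr hm1pos
  have hpc1 : pc < 1 := by rw [hpc]; rw [div_lt_one hm1pos]; exact h1m
  -- existence of k₀ ≥ 2 with a k₀ > 0
  obtain ⟨k₀, hk₀2, hak₀⟩ : ∃ k, 2 ≤ k ∧ 0 < a k := by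
    by_contra hcon
    push_neg at hcon
    have hz : ∀ k, 2 ≤ k → a k = 0 := fun k hk => le_antisymm (hcon k hk) (ha0 k)
    have : m₁ ≤ 1 := by
      refine hasSum_le (fun k => ?_) hm1 ha1
      match k with
      | 0 => simp [ha0 0]
      | 1 => simp
      | (m+2) => rw [hz (m+2) (by omega)]; simp
    linarith
  have hm2pos : 0 < m₂ := by
    have h1 : (k₀:ℝ) * ((k₀:ℝ)-1) * a k₀ ≤ m₂ := by
      refine le_hasSum hm2 k₀ (fun j _ => ?_)
      exact mul_nonneg (aux_nn j) (ha0 j)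
    have h2 : (2:ℝ) ≤ (k₀:ℝ) := by exact_mod_cast hk₀2
    have h3 : (0:ℝ) < (k₀:ℝ)*((k₀:ℝ)-1)*a k₀ :=
      mul_pos (mul_pos (by linarith) (by linarith)) hak₀
    linarith
  set β : ℝ := (k₀:ℝ)*((k₀:ℝ)-1)*a k₀*((1-pc)/2)^(k₀-2) with hβdef
  have hβ0 : 0 < β := by
    have h2 : (2:ℝ) ≤ (k₀:ℝ) := by exact_mod_cast hk₀2
    have h4 : (0:ℝ) < ((1-pc)/2)^(k₀-2) := pow_pos (by linarith) _
    exact mul_pos (mul_pos (mul_pos (by linarith) (by linarith)) hak₀) h4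
  refine ⟨β*m₁/m₂, div_pos (mul_pos hβ0 hm1pos) hm2pos, fun p hp => ?_⟩
  obtain ⟨hppc, hppd⟩ := hp
  have hp0 : 0 < p := lt_trans hpc0 hppc
  have hp1 : p < 1 := by linarith [hppd, hpc1]
  obtain ⟨hqmem, hfix⟩ := hq p ⟨hppc, hp1.le⟩
  obtain ⟨hq0, hq1⟩ := hqmem
  set Q : ℝ := q p with hQdef
  set x₀ : ℝ := p * Q + 1 - p with hx₀def
  set d : ℝ := p * (1 - Q) with hddef
  have hd0 : 0 ≤ d := mul_nonneg hp0.le (by linarith)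
  have hdlt : d < 1 := by
    have : d ≤ p := by nlinarith
    linarith
  have hxd : x₀ = 1 - d := by rw [hx₀def, hddef]; ring
  have hx₀0 : 0 ≤ x₀ := by rw [hxd]; linarith
  have hx₀1 : x₀ ≤ 1 := by rw [hxd]; linarith
  have hx₀lb : (1-pc)/2 ≤ x₀ := by
    have : 1 - p ≤ x₀ := by rw [hxd, hddef]; nlinarith
    linarith
  -- summabilities
  have sA : Summable (fun n : ℕ => a n * x₀^n) := by
    refine Summable.of_nonneg_of_le (fun n => mul_nonneg (ha0 n) (pow_nonneg hx₀0 n)) (fun n => ?_) ha1.summable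
    have : x₀^n ≤ 1 := pow_le_one₀ hx₀0 hx₀1
    nlinarith [ha0 n]
  have nn1 : ∀ n : ℕ, 0 ≤ (n:ℝ) * a n * x₀^(n-1) :=
    fun n => mul_nonneg (mul_nonneg (Nat.cast_nonneg n) (ha0 n)) (pow_nonneg hx₀0 _)
  have nn2 : ∀ n : ℕ, 0 ≤ (n:ℝ) * ((n:ℝ)-1) * a n * x₀^(n-2) :=
    fun n => mul_nonneg (mul_nonneg (aux_nn n) (ha0 n)) (pow_nonneg hx₀0 _)
  have sS1 : Summable (fun n : ℕ => (n:ℝ) * a n * x₀^(n-1)) := by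
    refine Summable.of_nonneg_of_le nn1 (fun n => ?_) hm1.summable
    have h1 : x₀^(n-1) ≤ 1 := pow_le_one₀ hx₀0 hx₀1
    have h2 : 0 ≤ (n:ℝ) * a n := mul_nonneg (Nat.cast_nonneg n) (ha0 n)
    nlinarith
  have sS2 : Summable (fun n : ℕ => (n:ℝ) * ((n:ℝ)-1) * a n * x₀^(n-2)) := by
    refine Summable.of_nonneg_of_le nn2 (fun n => ?_) hm2.summable
    have h1 : x₀^(n-2) ≤ 1 := pow_le_one₀ hx₀0 hx₀1
    have h2 : 0 ≤ (n:ℝ) * ((n:ℝ)-1) * a n := mul_nonneg (aux_nn n) (ha0 n)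
    nlinarith
  set S₁ : ℝ := ∑' n : ℕ, (n:ℝ) * a n * x₀^(n-1) with hS₁def
  set S₂ : ℝ := ∑' n : ℕ, (n:ℝ) * ((n:ℝ)-1) * a n * x₀^(n-2) with hS₂def
  have hS₂0 : 0 ≤ S₂ := tsum_nonneg nn2
  -- pgf a x₀ = Q
  have hfix' : (∑' n : ℕ, a n * x₀^n) = Q := by
    have : pgfp a p Q = pgf a x₀ := by rw [pgfp, hx₀def]
    rw [← hfix, this, pgf]
  have hAsum : HasSum (fun n : ℕ => a n * x₀^n) Q := by
    have := sA.hasSum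
    rwa [hfix'] at this
  -- derivative computation
  have hderiv : deriv (pgfp a p) Q = ∑' n : ℕ, a n * ((n:ℝ) * x₀^(n-1) * p) := by
    have heq : pgfp a p = fun z => ∑' n : ℕ, a n * (p*z+1-p)^n := by
      funext z; rw [pgfp, pgf]
    have hball : Q ∈ Metric.ball (0:ℝ) 1 := by
      simp [Real.dist_eq, abs_of_nonneg hq0]; exact hq1
    have h0ball : (0:ℝ) ∈ Metric.ball (0:ℝ) 1 := by simp
    have hder : HasDerivAt (fun z => ∑' n : ℕ, a n * (p*z+1-p)^n)
        (∑' n : ℕ, a n * ((n:ℝ) * (p*Q+1-p)^(n-1) * p)) Q := by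
      refine hasDerivAt_tsum_of_isPreconnected
        (u := fun n : ℕ => ((n:ℝ) * a n) * p)
        (hm1.summable.mul_right p) Metric.isOpen_ball
        (convex_ball (0:ℝ) 1).isPreconnected
        (g := fun (n : ℕ) (z : ℝ) => a n * (p*z+1-p)^n)
        (g' := fun (n : ℕ) (z : ℝ) => a n * ((n:ℝ) * (p*z+1-p)^(n-1) * p))
        (fun n z _ => ?_) (fun n z hz => ?_) h0ball ?_ hball
      · have hlin : HasDerivAt (fun s : ℝ => p*s+1-p) p z := by
          have h := ((hasDerivAt_id z).const_mul p).add_const (1-p)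
          have e : (fun s : ℝ => p*s+1-p) = fun s : ℝ => p * id s + (1-p) := by
            funext s; simp only [id]; ring
          rw [e]
          simpa using h
        exact ((hasDerivAt_pow n _).comp z hlin).const_mul (a n)
      · have hz' : |z| < 1 := by
          simpa [Real.dist_eq] using hz
        have hw : |p*z+1-p| ≤ 1 := by
          rcases abs_lt.mp hz' with ⟨h1, h2⟩
          rw [abs_le]; constructor <;> nlinarith
        have hwp : |p*z+1-p|^(n-1) ≤ 1 := pow_le_one₀ (abs_nonneg _) hw
        rw [Real.norm_eq_abs, abs_mul, abs_mul, abs_mul,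
          abs_of_nonneg (ha0 n), abs_of_nonneg (Nat.cast_nonneg n),
          abs_of_nonneg hp0.le, abs_pow]
        calc a n * ((n:ℝ) * |p*z+1-p|^(n-1) * p) ≤ a n * ((n:ℝ) * 1 * p) := by
              have h2 : 0 ≤ (n:ℝ) * a n * p :=
                mul_nonneg (mul_nonneg (Nat.cast_nonneg n) (ha0 n)) hp0.le
              nlinarith [mul_nonneg (mul_nonneg (ha0 n) (Nat.cast_nonneg n : (0:ℝ) ≤ n)) hp0.le]
          _ = (n:ℝ) * a n * p := by ring
      · refine Summable.of_nonneg_of_le (fun n => ?_) (fun n => ?_) ha1.summable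
        · exact mul_nonneg (ha0 n) (pow_nonneg (by linarith) n)
        · have h1 : (0:ℝ) ≤ p*0+1-p := by linarith
          have h2 : p*0+1-p ≤ 1 := by linarith
          have h3 := pow_le_one₀ h1 h2 (n := n)
          calc a n * (p*0+1-p)^n ≤ a n * 1 := mul_le_mul_of_nonneg_left h3 (ha0 n)
            _ = a n := mul_one _
    rw [heq, hder.deriv]
  have hDS : deriv (pgfp a p) Q = p * S₁ := by
    rw [hderiv, hS₁def, ← tsum_mul_left]
    exact tsum_congr (fun n => by ring)
  -- inequality A
  have ineqA : 2*Q ≤ 2*1 - 2*d*m₁ + d^2*m₂ := by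
    refine hasSum_le (fun n => ?_) (hAsum.mul_left 2)
      (((ha1.mul_left 2).sub (hm1.mul_left (2*d))).add (hm2.mul_left (d^2)))
    have h := mul_le_mul_of_nonneg_left (aux_monoA d hd0 hdlt.le n) (ha0 n)
    rw [← hxd] at h
    nlinarith [h]
  -- inequality B
  have hs1 : HasSum (fun n : ℕ => (n:ℝ)*a n*x₀^(n-1)) S₁ := by
    rw [hS₁def]; exact sS1.hasSum
  have hs2 : HasSum (fun n : ℕ => (n:ℝ)*((n:ℝ)-1)*a n*x₀^(n-2)) S₂ := by
    rw [hS₂def]; exact sS2.hasSum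
  have hsumB : HasSum (fun n : ℕ => 2*(a n * x₀^n) + 2*d*((n:ℝ)*a n*x₀^(n-1))
      + d^2*((n:ℝ)*((n:ℝ)-1)*a n*x₀^(n-2))) (2*Q + 2*d*S₁ + d^2*S₂) :=
    ((hAsum.mul_left 2).add (hs1.mul_left (2*d))).add (hs2.mul_left (d^2))
  have ineqB : 2*Q + 2*d*S₁ + d^2*S₂ ≤ 2*1 := by
    refine hasSum_le (fun n => ?_) hsumB (ha1.mul_left 2)
    have h := mul_le_mul_of_nonneg_left (aux_monoB x₀ d hx₀0 hd0 n) (ha0 n)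
    have hx1 : x₀ + d = 1 := by rw [hxd]; ring
    rw [hx1, one_pow] at h
    nlinarith [h]
  -- lower bound on S₂
  have hβS₂ : β ≤ S₂ := by
    have h1 : (k₀:ℝ)*((k₀:ℝ)-1)*a k₀*x₀^(k₀-2) ≤ S₂ :=
      Summable.le_tsum sS2 k₀ (fun j _ => nn2 j)
    have h2 : ((1-pc)/2)^(k₀-2) ≤ x₀^(k₀-2) :=
      pow_le_pow_left₀ (by linarith) hx₀lb _
    have h3 : 0 ≤ (k₀:ℝ)*((k₀:ℝ)-1)*a k₀ := mul_nonneg (aux_nn k₀) (ha0 k₀)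
    nlinarith [mul_le_mul_of_nonneg_left h2 h3]
  -- combine A
  have hYpos : 0 < 1 - Q := by linarith
  have hA' : 2*(p*m₁ - 1) ≤ p^2*(1-Q)*m₂ := by
    have hfac : 0 ≤ (1-Q) * (2 - 2*p*m₁ + p^2*(1-Q)*m₂) := by
      have e : (1-Q) * (2 - 2*p*m₁ + p^2*(1-Q)*m₂) = 2*1 - 2*d*m₁ + d^2*m₂ - 2*Q := by
        rw [hddef]; ring
      linarith [e, ineqA]
    nlinarith [hfac, hYpos]
  -- combine B
  have hB' : p*S₁ ≤ 1 - p^2*(1-Q)*S₂/2 := by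
    have ineqB' : 2*Q + 2*(p*(1-Q))*S₁ + (p*(1-Q))^2*S₂ ≤ 2 := by
      rw [← hddef]; linarith [ineqB]
    nlinarith [ineqB', hYpos]
  -- final
  rw [hDS]
  have hm₁pc : m₁ * pc = 1 := by rw [hpc]; field_simp
  have key : m₂ * (p*S₁) ≤ m₂ * (1 - (β*m₁/m₂)*(p-pc)) := by
    have e : m₂ * (1 - (β*m₁/m₂)*(p-pc)) = m₂ - β*m₁*(p-pc) := by
      field_simp
    rw [e]
    have t1 : m₂ * (p*S₁) ≤ m₂ * (1 - p^2*(1-Q)*S₂/2) :=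
      mul_le_mul_of_nonneg_left hB' hm2pos.le
    have t2 : p^2*(1-Q)*β ≤ p^2*(1-Q)*S₂ :=
      mul_le_mul_of_nonneg_left hβS₂ (by positivity)
    have t3 : β*(2*(p*m₁-1)) ≤ β*(p^2*(1-Q)*m₂) :=
      mul_le_mul_of_nonneg_left hA' hβ0.le
    have e2 : β*m₁*(p-pc) = β*(p*m₁ - 1) := by
      have h : m₁*p - m₁*pc = p*m₁ - 1 := by rw [hm₁pc]; ring
      linear_combination β * h
    have t2' : m₂*(p^2*(1-Q)*β) ≤ m₂*(p^2*(1-Q)*S₂) :=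
      mul_le_mul_of_nonneg_left t2 hm2pos.le
    rw [e2]
    linarith [t1, t2', t3]
  exact le_of_mul_le_mul_left key hm2pos

set_option maxHeartbeats 1000000

/-- There exist `c > 0` and `p_d > p_c` such that for every `p ∈ (p_c, p_d)`, every
`θ > 1` with `K(θ) = 1/f_p'(q_p)`, and every `n ≥ 1`, one has
`θ^{-n (p - p_c)^{-1/2}} ≤ e^{-c n}`. -/
theorem trap_displacement_exponential_bound
    (a : ℕ → ℝ) (m₁ m₂ m₃ pc : ℝ) (q : ℝ → ℝ)
    (ha0 : ∀ k, 0 ≤ a k) (ha1 : HasSum a 1)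
    (hm1 : HasSum (fun k : ℕ => (k : ℝ) * a k) m₁) (h1m : 1 < m₁)
    (hm2 : HasSum (fun k : ℕ => (k : ℝ) * ((k : ℝ) - 1) * a k) m₂)
    (hm3 : HasSum (fun k : ℕ => (k : ℝ) * ((k : ℝ) - 1) * ((k : ℝ) - 2) * a k) m₃)
    (hpc : pc = 1 / m₁)
    (hq : ∀ p ∈ Set.Ioc pc 1, q p ∈ Set.Ico (0 : ℝ) 1 ∧ pgfp a p (q p) = q p)
    {Ω : Type*} [MeasurableSpace Ω] (μ : Measure Ω) [IsProbabilityMeasure μ]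
    (X : Ω → ℤ) (hX : Measurable X)
    (hint : Integrable (fun ω => (X ω : ℝ)) μ)
    (hmean : ∫ ω, (X ω : ℝ) ∂μ = 0)
    (hexp : ∀ c : ℝ, 0 < c → Integrable (fun ω => Real.exp (c * |(X ω : ℝ)|)) μ) :
    ∃ c > (0 : ℝ), ∃ pd, pc < pd ∧ ∀ p ∈ Set.Ioo pc pd, ∀ θ : ℝ, 1 < θ →
      (∫ ω, θ ^ X ω ∂μ) = 1 / deriv (pgfp a p) (q p) →
      ∀ n : ℕ, 1 ≤ n →
        θ ^ (-(n : ℝ) / Real.sqrt (p - pc)) ≤ Real.exp (-(c * n)) := by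
  obtain ⟨A, hA0, hDle⟩ := deriv_le a m₁ m₂ pc q ha0 ha1 hm1 h1m hm2 hpc hq
  set M : ℝ := ∫ ω, ((X ω : ℝ)^2 * Real.exp |(X ω : ℝ)|) ∂μ with hMdef
  have hM0 : 0 ≤ M := integral_nonneg (fun ω => by positivity)
  have hM1 : (0:ℝ) < M + 1 := by linarith
  have hm1pos : (0:ℝ) < m₁ := by linarith
  have hpc0 : 0 < pc := by rw [hpc]; exact one_div_pos.mpr hm1pos
  have hpc1 : pc < 1 := by rw [hpc, div_lt_one hm1pos]; exact h1m
  refine ⟨min 1 (Real.sqrt (A/(M+1))),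
    lt_min one_pos (Real.sqrt_pos.mpr (div_pos hA0 hM1)), (1+pc)/2, by linarith, ?_⟩
  set c := min 1 (Real.sqrt (A/(M+1))) with hcdef
  intro p hp θ hθ hK n _
  have hθ0 : (0:ℝ) < θ := lt_trans one_pos hθ
  set t := Real.log θ with htdef
  have ht0 : 0 < t := Real.log_pos hθ
  have hXm : AEStronglyMeasurable (fun ω => (X ω : ℝ)) μ := hint.aestronglyMeasurable
  have hmeas_exp : AEStronglyMeasurable (fun ω => Real.exp (t * (X ω : ℝ))) μ :=
    (Real.continuous_exp.comp (continuous_const.mul continuous_id)).comp_aestronglyMeasurable hXm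
  have Iexp : Integrable (fun ω => Real.exp (t * (X ω : ℝ))) μ := by
    refine Integrable.mono' (hexp t ht0) hmeas_exp (Filter.Eventually.of_forall fun ω => ?_)
    rw [Real.norm_eq_abs, abs_of_pos (Real.exp_pos _)]
    exact Real.exp_le_exp.mpr (mul_le_mul_of_nonneg_left (le_abs_self _) ht0.le)
  have I3 : Integrable (fun ω => (X ω : ℝ)^2 * Real.exp |(X ω : ℝ)|) μ := by
    refine Integrable.mono' (hexp 3 (by norm_num))
      (((continuous_pow 2).mul (Real.continuous_exp.comp continuous_abs)).comp_aestronglyMeasurable hXm)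
      (Filter.Eventually.of_forall fun ω => ?_)
    have hw0 : 0 ≤ |(X ω : ℝ)| := abs_nonneg _
    have h1 : |(X ω : ℝ)| ≤ Real.exp |(X ω : ℝ)| := by
      linarith [Real.add_one_le_exp |(X ω : ℝ)|]
    have h2 : |(X ω : ℝ)| * |(X ω : ℝ)| ≤ Real.exp |(X ω : ℝ)| * Real.exp |(X ω : ℝ)| :=
      mul_le_mul h1 h1 hw0 (Real.exp_pos _).le
    rw [Real.norm_eq_abs, abs_of_nonneg (by positivity)]
    calc (X ω : ℝ)^2 * Real.exp |(X ω : ℝ)|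
        = (|(X ω : ℝ)| * |(X ω : ℝ)|) * Real.exp |(X ω : ℝ)| := by
          rw [abs_mul_abs_self]
          ring
      _ ≤ (Real.exp |(X ω : ℝ)| * Real.exp |(X ω : ℝ)|) * Real.exp |(X ω : ℝ)| :=
          mul_le_mul_of_nonneg_right h2 (Real.exp_pos _).le
      _ = Real.exp (3 * |(X ω : ℝ)|) := by
          rw [← Real.exp_add, ← Real.exp_add]
          ring_nf
  have IlinInt : Integrable (fun ω => 1 + t * (X ω:ℝ)) μ :=
    (integrable_const 1).add (hint.const_mul t)
  have hlin_int : ∫ ω, (1 + t * (X ω:ℝ)) ∂μ = 1 := by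
    rw [integral_add (integrable_const 1) (hint.const_mul t), integral_const_mul, hmean,
      integral_const]
    simp
  have Klow : 1 ≤ ∫ ω, Real.exp (t * (X ω:ℝ)) ∂μ := by
    rw [← hlin_int]
    refine integral_mono IlinInt Iexp (fun ω => ?_)
    linarith [Real.add_one_le_exp (t * (X ω:ℝ))]
  have hKrw : (∫ ω, θ ^ X ω ∂μ) = ∫ ω, Real.exp (t * (X ω:ℝ)) ∂μ := by
    refine integral_congr_ae (Filter.Eventually.of_forall fun ω => ?_)
    show θ ^ X ω = Real.exp (t * (X ω:ℝ))
    rw [← Real.rpow_intCast θ (X ω), Real.rpow_def_of_pos hθ0, htdef]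
  rw [hKrw] at hK
  set K := ∫ ω, Real.exp (t * (X ω:ℝ)) ∂μ with hKdef
  set D := deriv (pgfp a p) (q p) with hDdef
  have hD : D ≤ 1 - A*(p-pc) := hDle p hp
  have hDpos : 0 < D := by
    by_contra hcon
    push_neg at hcon
    have h1 : 1/D ≤ 0 := one_div_nonpos.mpr hcon
    linarith [Klow, hK]
  have hE0 : 0 < 1 - A*(p-pc) := lt_of_lt_of_le hDpos hD
  have hKge : 1 + A*(p-pc) ≤ K := by
    have h1 : 1/(1-A*(p-pc)) ≤ 1/D := one_div_le_one_div_of_le hDpos hD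
    have h2 : 1 + A*(p-pc) ≤ 1/(1-A*(p-pc)) := by
      rw [le_div_iff₀ hE0]
      nlinarith [sq_nonneg (A*(p-pc))]
    linarith [hK]
  have hppc := hp.1
  have hs0 : 0 < Real.sqrt (p - pc) := Real.sqrt_pos.mpr (by linarith)
  have hsle1 : Real.sqrt (p - pc) ≤ 1 := by
    refine Real.sqrt_le_one.mpr ?_
    have := hp.2
    linarith
  have hts : c * Real.sqrt (p-pc) ≤ t := by
    rcases le_or_gt t 1 with ht1 | ht1
    · have hptw : ∀ ω, Real.exp (t*(X ω:ℝ))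
          ≤ 1 + t*(X ω:ℝ) + t^2 * ((X ω:ℝ)^2 * Real.exp |(X ω:ℝ)|) := by
        intro ω
        have h := aux_exp_quad (t * (X ω:ℝ))
        have e1 : |t * (X ω:ℝ)| = t * |(X ω:ℝ)| := by
          rw [abs_mul, abs_of_pos ht0]
        rw [e1] at h
        have h2 : Real.exp (t*|(X ω:ℝ)|) ≤ Real.exp |(X ω:ℝ)| := by
          refine Real.exp_le_exp.mpr ?_
          nlinarith [abs_nonneg (X ω:ℝ)]
        have h3 : (t*(X ω:ℝ))^2 * Real.exp (t*|(X ω:ℝ)|)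
            ≤ t^2 * ((X ω:ℝ)^2 * Real.exp |(X ω:ℝ)|) := by
          have e2 : (t*(X ω:ℝ))^2 = t^2 * (X ω:ℝ)^2 := by ring
          rw [e2]
          have h4 : 0 ≤ t^2 * (X ω:ℝ)^2 := by positivity
          calc t^2 * (X ω:ℝ)^2 * Real.exp (t*|(X ω:ℝ)|)
              ≤ t^2 * (X ω:ℝ)^2 * Real.exp |(X ω:ℝ)| :=
                mul_le_mul_of_nonneg_left h2 h4
            _ = t^2 * ((X ω:ℝ)^2 * Real.exp |(X ω:ℝ)|) := by ring
        linarith [h, h3]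
      have Kup : K ≤ 1 + M * t^2 := by
        have hint2 : Integrable (fun ω => 1 + t*(X ω:ℝ)
            + t^2 * ((X ω:ℝ)^2 * Real.exp |(X ω:ℝ)|)) μ :=
          IlinInt.add (I3.const_mul (t^2))
        have h5 : K ≤ ∫ ω, (1 + t*(X ω:ℝ) + t^2 * ((X ω:ℝ)^2 * Real.exp |(X ω:ℝ)|)) ∂μ :=
          integral_mono Iexp hint2 hptw
        have h6 : ∫ ω, (1 + t*(X ω:ℝ) + t^2 * ((X ω:ℝ)^2 * Real.exp |(X ω:ℝ)|)) ∂μ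
            = 1 + t^2 * M := by
          rw [integral_add IlinInt (I3.const_mul (t^2)), hlin_int, integral_const_mul]
        linarith [h5, h6.le, h6.ge]
      have hAt : A*(p-pc) ≤ (M+1)*t^2 := by nlinarith [hKge, Kup, sq_nonneg t]
      have h5 : A/(M+1)*(p-pc) ≤ t^2 := by
        rw [div_mul_eq_mul_div, div_le_iff₀ hM1]
        nlinarith [hAt]
      have h6 : Real.sqrt (A/(M+1)*(p-pc)) ≤ t := by
        rw [show t = Real.sqrt (t^2) from (Real.sqrt_sq ht0.le).symm]
        exact Real.sqrt_le_sqrt h5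
      have h7 : Real.sqrt (A/(M+1)) * Real.sqrt (p-pc) = Real.sqrt (A/(M+1)*(p-pc)) :=
        (Real.sqrt_mul (le_of_lt (div_pos hA0 hM1)) _).symm
      calc c * Real.sqrt (p-pc) ≤ Real.sqrt (A/(M+1)) * Real.sqrt (p-pc) :=
            mul_le_mul_of_nonneg_right (min_le_right _ _) hs0.le
        _ = Real.sqrt (A/(M+1)*(p-pc)) := h7
        _ ≤ t := h6
    · have hc1 : c ≤ 1 := min_le_left _ _
      have hc0 : 0 ≤ c := le_min one_pos.le (Real.sqrt_nonneg _)
      nlinarith [hc1, hc0, hsle1, hs0, ht1]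
  rw [Real.rpow_def_of_pos hθ0, Real.exp_le_exp, ← htdef]
  have hn0 : (0:ℝ) ≤ (n:ℝ) := Nat.cast_nonneg n
  have h1 : c * Real.sqrt (p-pc) * (n:ℝ) ≤ t * (n:ℝ) := mul_le_mul_of_nonneg_right hts hn0
  have h2 : c*(n:ℝ) ≤ t*(n:ℝ)/Real.sqrt (p-pc) := by
    rw [le_div_iff₀ hs0]
    nlinarith [h1]
  have e : t * (-(n:ℝ)/Real.sqrt (p-pc)) = -(t*(n:ℝ)/Real.sqrt (p-pc)) := by ring
  rw [e]
  linarith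
end

section
/- For every real q ≥ 1 and every n ≥ 0, the Galton–Watson generation sizes satisfy E[Z_n^{2q}] ≤ E[ξ^{2q}]^n, where Z_0 = 1 (and the bound is interpreted as trivially true if E[ξ^{2q}] = ∞). -/
/-!
By the power-mean inequality, `Z_{n+1}^p ≤ Z_n^(p-1) * ∑_{i < Z_n} ξ_{n,i}^p` for `p ≥ 1`.
The size `Z_n` is determined by the offspring numbers of earlier generations, hence is
independent of every `ξ_{n,i}`; a weighted Wald identity then gives
`E[Z_n^(p-1) * ∑_{i < Z_n} ξ_{n,i}^p] = E[Z_n^p] * E[ξ^p]`, and the bound follows by induction.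
-/

open MeasureTheory ProbabilityTheory Finset
open scoped ENNReal

lemma ENNReal.natCast_mul_rpow_sub_one (k : ℕ) {p : ℝ} (hp : 1 ≤ p) :
    (k : ℝ≥0∞) * (k : ℝ≥0∞) ^ (p - 1) = (k : ℝ≥0∞) ^ p := by
  rcases eq_or_ne k 0 with rfl | hk
  · simp [ENNReal.zero_rpow_of_pos (by linarith : 0 < p)]
  · calc (k : ℝ≥0∞) * (k : ℝ≥0∞) ^ (p - 1) = (k : ℝ≥0∞) ^ (1 + (p - 1)) := by
          rw [ENNReal.rpow_add _ _ (by exact_mod_cast hk) (ENNReal.natCast_ne_top k),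
            ENNReal.rpow_one]
      _ = (k : ℝ≥0∞) ^ p := by ring_nf

theorem lintegral_mul_sum_range_of_indepFun {Ω : Type*} [MeasurableSpace Ω] {μ : Measure Ω}
    {N : Ω → ℕ} {X : ℕ → Ω → ℝ≥0∞} {m : ℝ≥0∞} (f : ℕ → ℝ≥0∞)
    (hN : Measurable N) (hX : ∀ i, Measurable (X i)) (hind : ∀ i, IndepFun N (X i) μ)
    (hm : ∀ i, ∫⁻ ω, X i ω ∂μ = m) :
    ∫⁻ ω, f (N ω) * ∑ i ∈ range (N ω), X i ω ∂μ = (∫⁻ ω, N ω * f (N ω) ∂μ) * m := by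
  -- Spread the random-length sum over all `i`, the weight of `X i` being `f N` on `{i < N}`.
  set g : ℕ → ℕ → ℝ≥0∞ := fun i k => if i < k then f k else 0
  have hg : ∀ i, Measurable (fun ω => g i (N ω)) := fun i => (measurable_of_countable (g i)).comp hN
  have hsum_X : ∀ ω, f (N ω) * ∑ i ∈ range (N ω), X i ω = ∑' i, g i (N ω) * X i ω := by
    intro ω
    rw [mul_sum, tsum_eq_sum (s := range (N ω)) fun i hi => by simp_all [g]]
    exact sum_congr rfl fun i hi => by simp_all [g]
  have hsum_g : ∀ k, ∑' i, g i k = k * f k := by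
    intro k
    rw [tsum_eq_sum (s := range k) fun i hi => by simp_all [g]]
    simp +contextual [g, sum_ite_of_true]
  calc ∫⁻ ω, f (N ω) * ∑ i ∈ range (N ω), X i ω ∂μ
      = ∑' i, ∫⁻ ω, g i (N ω) * X i ω ∂μ := by
        simp_rw [hsum_X]
        exact lintegral_tsum fun i => ((hg i).mul (hX i)).aemeasurable
    _ = ∑' i, (∫⁻ ω, g i (N ω) ∂μ) * m := by
        congr with i
        rw [lintegral_mul_eq_lintegral_mul_lintegral_of_indepFun'' (hg i).aemeasurable
          (hX i).aemeasurable ((hind i).comp (measurable_of_countable (g i)) measurable_id), hm i]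
    _ = (∫⁻ ω, N ω * f (N ω) ∂μ) * m := by
        rw [ENNReal.tsum_mul_right, ← lintegral_tsum fun i => (hg i).aemeasurable]
        simp_rw [hsum_g]

section GaltonWatson

variable {Ω : Type*} (ξ : ℕ → ℕ → Ω → ℕ)

abbrev pastOffspring (n : ℕ) : MeasurableSpace Ω :=
  ⨆ q ∈ {q : ℕ × ℕ | q.1 < n}, MeasurableSpace.comap (ξ q.1 q.2) inferInstance

lemma measurable_pastOffspring {m n : ℕ} (h : m < n) (i : ℕ) :
    Measurable[pastOffspring ξ n] (ξ m i) :=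
  measurable_iff_comap_le.mpr <| le_iSup₂_of_le (f := fun (q : ℕ × ℕ) (_ : q.1 < n) =>
    MeasurableSpace.comap (ξ q.1 q.2) inferInstance) (m, i) h le_rfl

lemma pastOffspring_mono : Monotone (pastOffspring ξ) := fun _ _ hab =>
  iSup₂_mono' fun q hq => ⟨q, lt_of_lt_of_le hq hab, le_rfl⟩

lemma pastOffspring_le [mΩ : MeasurableSpace Ω] (hmeas : ∀ n i, Measurable (ξ n i)) (n : ℕ) :
    pastOffspring ξ n ≤ mΩ :=
  iSup₂_le fun q _ => (hmeas q.1 q.2).comap_le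

variable {ξ} {Z : ℕ → Ω → ℕ}

lemma measurable_generation_pastOffspring (hZ0 : ∀ ω, Z 0 ω = 1)
    (hZS : ∀ n ω, Z (n + 1) ω = ∑ i ∈ range (Z n ω), ξ n i ω) (n : ℕ) :
    Measurable[pastOffspring ξ n] (Z n) := by
  induction n with
  | zero => simp only [show Z 0 = fun _ => 1 from funext hZ0, measurable_const]
  | succ n ih =>
    refine @measurable_to_countable' ℕ Ω _ _ (pastOffspring ξ (n + 1)) _ fun m => ?_
    have hpre : Z (n + 1) ⁻¹' {m} = ⋃ k, Z n ⁻¹' {k} ∩ {ω | ∑ i ∈ range k, ξ n i ω = m} := by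
      ext ω; simp [hZS n ω]
    rw [hpre]
    refine .iUnion fun k => .inter ?_ ?_
    · exact ih.mono (pastOffspring_mono ξ n.le_succ) le_rfl (measurableSet_singleton k)
    · exact (Finset.measurable_sum _ fun i _ => measurable_pastOffspring ξ n.lt_succ_self i)
        (measurableSet_singleton m)

variable [MeasurableSpace Ω] {μ : Measure Ω}

lemma indepFun_generation_offspring (hmeas : ∀ n i, Measurable (ξ n i))
    (hindep : iIndepFun (fun p : ℕ × ℕ => ξ p.1 p.2) μ) (hZ0 : ∀ ω, Z 0 ω = 1)
    (hZS : ∀ n ω, Z (n + 1) ω = ∑ i ∈ range (Z n ω), ξ n i ω) (n i : ℕ) :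
    IndepFun (Z n) (ξ n i) μ := by
  have hpast := indep_biSup_compl (fun q : ℕ × ℕ => (hmeas q.1 q.2).comap_le) hindep.iIndep
    {q | q.1 < n}
  rw [IndepFun_iff_Indep]
  refine indep_of_indep_of_le_right (indep_of_indep_of_le_left hpast ?_) ?_
  · exact (measurable_generation_pastOffspring hZ0 hZS n).comap_le
  · exact le_iSup₂_of_le (f := fun (q : ℕ × ℕ) (_ : q ∈ {q : ℕ × ℕ | q.1 < n}ᶜ) =>
      MeasurableSpace.comap (ξ q.1 q.2) inferInstance) (n, i) (by simp) le_rfl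

lemma lintegral_generation_succ_rpow_le (hmeas : ∀ n i, Measurable (ξ n i))
    (hindep : iIndepFun (fun p : ℕ × ℕ => ξ p.1 p.2) μ) {ξ₀ : Ω → ℕ}
    (hid : ∀ n i, IdentDistrib (ξ n i) ξ₀ μ μ) (hZ0 : ∀ ω, Z 0 ω = 1)
    (hZS : ∀ n ω, Z (n + 1) ω = ∑ i ∈ range (Z n ω), ξ n i ω) {p : ℝ} (hp : 1 ≤ p) (n : ℕ) :
    ∫⁻ ω, (Z (n + 1) ω : ℝ≥0∞) ^ p ∂μ ≤
      (∫⁻ ω, (Z n ω : ℝ≥0∞) ^ p ∂μ) * ∫⁻ ω, (ξ₀ ω : ℝ≥0∞) ^ p ∂μ := by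
  have hpow : Measurable fun k : ℕ => (k : ℝ≥0∞) ^ p := measurable_of_countable _
  have hZ : Measurable (Z n) :=
    (measurable_generation_pastOffspring hZ0 hZS n).mono (pastOffspring_le ξ hmeas n) le_rfl
  calc ∫⁻ ω, (Z (n + 1) ω : ℝ≥0∞) ^ p ∂μ
      ≤ ∫⁻ ω, (Z n ω : ℝ≥0∞) ^ (p - 1) * ∑ i ∈ range (Z n ω), (ξ n i ω : ℝ≥0∞) ^ p ∂μ := by
        refine lintegral_mono fun ω => ?_
        simpa [hZS n ω] using ENNReal.rpow_sum_le_const_mul_sum_rpow (range (Z n ω))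
          (fun i => (ξ n i ω : ℝ≥0∞)) hp
    _ = (∫⁻ ω, (Z n ω : ℝ≥0∞) * (Z n ω : ℝ≥0∞) ^ (p - 1) ∂μ) * ∫⁻ ω, (ξ₀ ω : ℝ≥0∞) ^ p ∂μ :=
        lintegral_mul_sum_range_of_indepFun (fun k : ℕ => (k : ℝ≥0∞) ^ (p - 1)) hZ
          (fun i => hpow.comp (hmeas n i))
          (fun i =>
            (indepFun_generation_offspring hmeas hindep hZ0 hZS n i).comp measurable_id hpow)
          (fun i => ((hid n i).comp hpow).lintegral_eq)
    _ = (∫⁻ ω, (Z n ω : ℝ≥0∞) ^ p ∂μ) * ∫⁻ ω, (ξ₀ ω : ℝ≥0∞) ^ p ∂μ := by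
        simp_rw [ENNReal.natCast_mul_rpow_sub_one _ hp]

end GaltonWatson

theorem gw_generation_moment_bound_general
    {Ω : Type*} [MeasurableSpace Ω] (μ : Measure Ω) [IsProbabilityMeasure μ]
    (ξ : ℕ → ℕ → Ω → ℕ) (ξ₀ : Ω → ℕ)
    (hmeas : ∀ n i, Measurable (ξ n i))
    (hindep : iIndepFun
      (fun p : ℕ × ℕ => ξ p.1 p.2) μ)
    (hid : ∀ n i, IdentDistrib (ξ n i) ξ₀ μ μ)
    (Z : ℕ → Ω → ℕ)
    (hZ0 : ∀ ω, Z 0 ω = 1)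
    (hZS : ∀ n ω, Z (n + 1) ω = ∑ i ∈ Finset.range (Z n ω), ξ n i ω) :
    ∀ q : ℝ, 1 ≤ q → ∀ n : ℕ,
      (∫⁻ ω, (Z n ω : ℝ≥0∞) ^ (2 * q) ∂μ) ≤
        (∫⁻ ω, (ξ₀ ω : ℝ≥0∞) ^ (2 * q) ∂μ) ^ n := by
  intro q hq n
  induction n with
  | zero => simp [hZ0]
  | succ n ih =>
    calc ∫⁻ ω, (Z (n + 1) ω : ℝ≥0∞) ^ (2 * q) ∂μ
        ≤ (∫⁻ ω, (Z n ω : ℝ≥0∞) ^ (2 * q) ∂μ) * ∫⁻ ω, (ξ₀ ω : ℝ≥0∞) ^ (2 * q) ∂μ :=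
          lintegral_generation_succ_rpow_le hmeas hindep hid hZ0 hZS (by linarith) n
      _ ≤ (∫⁻ ω, (ξ₀ ω : ℝ≥0∞) ^ (2 * q) ∂μ) ^ (n + 1) := by
          rw [pow_succ]; gcongr

/-- For a Galton–Watson process `(Z_n)` built from an i.i.d. array `(ξ_{n,i})` of
offspring variables distributed as `ξ₀`, with `Z_0 = 1` and
`Z_{n+1} = ∑_{i<Z_n} ξ_{n,i}`, one has `E[Z_n^{2q}] ≤ E[ξ^{2q}]^n` for every real
`q ≥ 1` and every `n ≥ 0` (trivially true when `E[ξ^{2q}] = ∞`). -/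
theorem gw_generation_moment_bound
    {Ω : Type*} [MeasurableSpace Ω] (μ : Measure Ω) [IsProbabilityMeasure μ]
    (ξ : ℕ → ℕ → Ω → ℕ) (ξ₀ : Ω → ℕ)
    (hmeas : ∀ n i, Measurable (ξ n i)) (hmeas0 : Measurable ξ₀)
    (hindep : iIndepFun
      (fun p : ℕ × ℕ => ξ p.1 p.2) μ)
    (hid : ∀ n i, IdentDistrib (ξ n i) ξ₀ μ μ)
    (Z : ℕ → Ω → ℕ)
    (hZ0 : ∀ ω, Z 0 ω = 1)
    (hZS : ∀ n ω, Z (n + 1) ω = ∑ i ∈ Finset.range (Z n ω), ξ n i ω) :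
    ∀ q : ℝ, 1 ≤ q → ∀ n : ℕ,
      (∫⁻ ω, (Z n ω : ℝ≥0∞) ^ (2 * q) ∂μ) ≤
        (∫⁻ ω, (ξ₀ ω : ℝ≥0∞) ^ (2 * q) ∂μ) ^ n :=
  gw_generation_moment_bound_general μ ξ ξ₀ hmeas hindep hid Z hZ0 hZS
end
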